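/- Let W_δ satisfy the quadratic bounds ‖x - x̃‖²_{P₁} ≤ W_δ(x,x̃) ≤ ‖x - x̃‖²_{P₂} with P₁, P₂ symmetric positive definite, and the M-step inequality W_δ(x̂(t),x(t)) ≤ μ^M W_δ(x̂(t-M),x(t-M)) + d for all t ≥ M with μ^M ∈ [0,1) and d ≥ 0. Then for all t, ‖x̂(t)-x(t)‖_{P₁} ≤ √(λ_max(P₂,P₁)) · √μ^{t - (t mod M)} · ‖x̂(t mod M) - x(t mod M)‖_{P₁} + √(d/(1-μ^M)); in particular, the estimation error in the P₁-norm is bounded by a geometrically decaying term in t plus a constant depending only on d, μ, M. -/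
import Mathlib


open Matrix

private lemma sqrt_add_le' {a b : ℝ} (ha : 0 ≤ a) (hb : 0 ≤ b) :
    Real.sqrt (a + b) ≤ Real.sqrt a + Real.sqrt b := by
  have h : a + b ≤ (Real.sqrt a + Real.sqrt b) ^ 2 := by
    rw [add_sq, Real.sq_sqrt ha, Real.sq_sqrt hb]
    nlinarith [Real.sqrt_nonneg a, Real.sqrt_nonneg b]
  have h2 := Real.sqrt_le_sqrt h
  rwa [Real.sqrt_sq (by positivity)] at h2

/-- From the quadratic bounds on a δ-IOSS Lyapunov function and an M-step contraction,
the estimation error in the P₁-weighted norm decays geometrically up to a constant offset. -/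
theorem mhe_error_bound {n : ℕ}
    (P₁ P₂ : Matrix (Fin n) (Fin n) ℝ) (hP₁ : P₁.PosDef) (hP₂ : P₂.PosDef)
    (W : (Fin n → ℝ) → (Fin n → ℝ) → ℝ)
    (x xhat : ℕ → Fin n → ℝ) (ν d lam : ℝ) (M : ℕ) (hM : 1 ≤ M)
    (hν0 : 0 ≤ ν) (hν1 : ν < 1) (hd : 0 ≤ d)
    -- quadratic sandwich bounds
    (hlow : ∀ a b : Fin n → ℝ, (a - b) ⬝ᵥ P₁.mulVec (a - b) ≤ W a b)
    (hupp : ∀ a b : Fin n → ℝ, W a b ≤ (a - b) ⬝ᵥ P₂.mulVec (a - b))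
    -- generalized eigenvalue bound relating P₂ to P₁
    (hlam : 0 ≤ lam)
    (hgen : ∀ z : Fin n → ℝ, z ⬝ᵥ P₂.mulVec z ≤ lam * (z ⬝ᵥ P₁.mulVec z))
    -- M-step contraction of the Lyapunov function
    (hcontr : ∀ t, M ≤ t → W (xhat t) (x t) ≤ ν * W (xhat (t - M)) (x (t - M)) + d) :
    ∀ t, Real.sqrt ((xhat t - x t) ⬝ᵥ P₁.mulVec (xhat t - x t)) ≤
      Real.sqrt lam * Real.sqrt (ν ^ (t / M)) *
        Real.sqrt ((xhat (t % M) - x (t % M)) ⬝ᵥ P₁.mulVec (xhat (t % M) - x (t % M)))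
      + Real.sqrt (d / (1 - ν)) := by
  have hq1 : ∀ z : Fin n → ℝ, 0 ≤ z ⬝ᵥ P₁.mulVec z := by
    intro z
    simpa using hP₁.posSemidef.re_dotProduct_nonneg z
  have h1ν : (0:ℝ) < 1 - ν := by linarith
  -- geometric sum bound
  have hS : ∀ k : ℕ, ∑ i ∈ Finset.range k, ν ^ i ≤ 1 / (1 - ν) := by
    intro k
    rw [geom_sum_eq (ne_of_lt hν1), ← neg_div_neg_eq]
    rw [neg_sub, neg_sub]
    have hνk : 0 ≤ ν ^ k := pow_nonneg hν0 k
    gcongr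
    linarith
  -- key induction
  have key : ∀ k r : ℕ, W (xhat (k * M + r)) (x (k * M + r)) ≤
      ν ^ k * W (xhat r) (x r) + d * ∑ i ∈ Finset.range k, ν ^ i := by
    intro k r
    induction k with
    | zero => simp
    | succ k ih =>
      have ht : M ≤ (k + 1) * M + r := by nlinarith [Nat.le_refl M]
      have hsub : (k + 1) * M + r - M = k * M + r := by
        have : (k + 1) * M + r = (k * M + r) + M := by ring
        omega
      have := hcontr ((k + 1) * M + r) ht
      rw [hsub] at this
      calc W (xhat ((k + 1) * M + r)) (x ((k + 1) * M + r))
          ≤ ν * W (xhat (k * M + r)) (x (k * M + r)) + d := this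
        _ ≤ ν * (ν ^ k * W (xhat r) (x r) + d * ∑ i ∈ Finset.range k, ν ^ i) + d := by
            have := mul_le_mul_of_nonneg_left ih hν0
            linarith
        _ = ν ^ (k + 1) * W (xhat r) (x r) + d * ∑ i ∈ Finset.range (k + 1), ν ^ i := by
            rw [geom_sum_succ]
            ring
  intro t
  set k := t / M with hk
  set r := t % M with hr
  have htkr : k * M + r = t := by
    rw [hk, hr, Nat.mul_comm]
    exact Nat.div_add_mod t M
  have hWr0 : 0 ≤ W (xhat r) (x r) := le_trans (hq1 _) (hlow _ _)
  have hWt : W (xhat t) (x t) ≤ ν ^ k * W (xhat r) (x r) + d / (1 - ν) := by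
    have h1 := key k r
    rw [htkr] at h1
    have h2 : d * ∑ i ∈ Finset.range k, ν ^ i ≤ d / (1 - ν) := by
      calc d * ∑ i ∈ Finset.range k, ν ^ i ≤ d * (1 / (1 - ν)) :=
            mul_le_mul_of_nonneg_left (hS k) hd
        _ = d / (1 - ν) := by ring
    linarith
  have hWrP : W (xhat r) (x r) ≤ lam * ((xhat r - x r) ⬝ᵥ P₁.mulVec (xhat r - x r)) :=
    le_trans (hupp _ _) (hgen _)
  calc Real.sqrt ((xhat t - x t) ⬝ᵥ P₁.mulVec (xhat t - x t))
      ≤ Real.sqrt (ν ^ k * W (xhat r) (x r) + d / (1 - ν)) :=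
        Real.sqrt_le_sqrt (le_trans (hlow _ _) hWt)
    _ ≤ Real.sqrt (ν ^ k * W (xhat r) (x r)) + Real.sqrt (d / (1 - ν)) :=
        sqrt_add_le' (mul_nonneg (pow_nonneg hν0 k) hWr0) (div_nonneg hd h1ν.le)
    _ ≤ Real.sqrt lam * Real.sqrt (ν ^ k) *
          Real.sqrt ((xhat r - x r) ⬝ᵥ P₁.mulVec (xhat r - x r))
        + Real.sqrt (d / (1 - ν)) := by
        gcongr
        rw [Real.sqrt_mul (pow_nonneg hν0 k)]
        rw [show Real.sqrt lam * Real.sqrt (ν ^ k) *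
              Real.sqrt ((xhat r - x r) ⬝ᵥ P₁.mulVec (xhat r - x r))
            = Real.sqrt (ν ^ k) *
              (Real.sqrt lam * Real.sqrt ((xhat r - x r) ⬝ᵥ P₁.mulVec (xhat r - x r))) by ring]
        gcongr
        rw [← Real.sqrt_mul hlam]
        exact Real.sqrt_le_sqrt hWrP
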